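/- For the two-phase game value function V(t) (expected total reward under the human threshold strategy t with robot best response), V(5/92) > V(0); that is, a human who sometimes sacrifices immediate reward to signal an intermediate θ achieves strictly higher total expected reward than the greedy expert demonstrator. -/

import Mathlib

open MeasureTheory intervalIntegral

/-- Human's phase-1 reward under the threshold-`t` strategy over actions
`{(0,2),(1,1),(2,0)}` with reward `θp + (1−θ)q`. -/
noncomputable def rH (θ t : ℝ) : ℝ :=
  if θ < 1/2 - t then 2 * (1 - θ) else if θ ≤ 1/2 + t then 1 else 2 * θ

/-- Robot's phase-2 reward: the action from `{(0,90),(50,50),(90,0)}` optimal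
for the posterior mean given the human's signal (for `t < 1/9`: `(0,90)`,
`(50,50)`, `(90,0)` on the low/middle/high signals). -/
noncomputable def rR (θ t : ℝ) : ℝ :=
  if θ < 1/2 - t then 90 * (1 - θ) else if θ ≤ 1/2 + t then 50 else 90 * θ

/-- Total expected value `V(t) = ∫₀¹ [r_H(θ,t) + r_R(θ,t)] dθ`. -/
noncomputable def V (t : ℝ) : ℝ := ∫ θ in (0:ℝ)..1, (rH θ t + rR θ t)

/-!
The two rewards add up to `92 (1 - θ)` below the middle band, `51` on the band
`[1/2 - t, 1/2 + t]` and `92 θ` above it. Integrating these pieces gives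
`V t = 69 + 10 t - 92 t²` for `0 ≤ t ≤ 1/2`, a concave parabola with vertex at `t = 5/92`,
so `V (5/92) - V 0 = 25/92`.
-/

open Set

theorem intervalIntegral.integral_ite_lt_ite_le {E : Type*} [NormedAddCommGroup E]
    [NormedSpace ℝ E] {μ : Measure ℝ} [NullSingletonClass μ] {f g h : ℝ → E} {a b c d : ℝ}
    (hab : a ≤ b) (hbc : b ≤ c) (hcd : c ≤ d) (hf : IntervalIntegrable f μ a b)
    (hg : IntervalIntegrable g μ b c) (hh : IntervalIntegrable h μ c d) :
    ∫ x in a..d, (if x < b then f x else if x ≤ c then g x else h x) ∂μ =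
      (∫ x in a..b, f x ∂μ) + (∫ x in b..c, g x ∂μ) + ∫ x in c..d, h x ∂μ := by
  set F := fun x => if x < b then f x else if x ≤ c then g x else h x
  have hFf : EqOn F f (uIoo a b) := by
    intro x hx
    rw [uIoo_of_le hab] at hx
    simp [F, hx.2]
  have hFg : EqOn F g (uIoo b c) := by
    intro x hx
    rw [uIoo_of_le hbc] at hx
    simp [F, hx.1.not_gt, hx.2.le]
  have hFh : EqOn F h (uIoo c d) := by
    intro x hx
    rw [uIoo_of_le hcd] at hx
    simp [F, hx.1.not_ge, (hbc.trans_lt hx.1).not_gt]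
  have iF₁ := hf.congr_uIoo hFf.symm
  have iF₂ := hg.congr_uIoo hFg.symm
  have iF₃ := hh.congr_uIoo hFh.symm
  rw [← integral_add_adjacent_intervals iF₁ (iF₂.trans iF₃),
    ← integral_add_adjacent_intervals iF₂ iF₃, ← add_assoc, integral_congr_uIoo hFf,
    integral_congr_uIoo hFg, integral_congr_uIoo hFh]

lemma rH_add_rR (θ t : ℝ) :
    rH θ t + rR θ t = if θ < 1/2 - t then 92 * (1 - θ) else if θ ≤ 1/2 + t then 51 else 92 * θ := by
  unfold rH rR
  split_ifs <;> ring

theorem V_eq {t : ℝ} (ht₀ : 0 ≤ t) (ht₁ : t ≤ 1/2) : V t = 69 + 10 * t - 92 * t ^ 2 := by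
  simp_rw [V, rH_add_rR]
  rw [integral_ite_lt_ite_le (by linarith) (by linarith) (by linarith)
    ((by fun_prop : Continuous _).intervalIntegrable _ _) intervalIntegrable_const
    ((by fun_prop : Continuous _).intervalIntegrable _ _)]
  simp only [intervalIntegral.integral_const_mul, intervalIntegral.integral_const_mul 92 fun x => x,
    integral_comp_sub_left fun x => x, integral_id, intervalIntegral.integral_const, smul_eq_mul]
  ring

/-- `V(5/92) > V(0)`: a human who sometimes sacrifices immediate reward to
signal an intermediate `θ` achieves strictly higher total expected reward than
the greedy expert demonstrator. -/
theorem deviation_beats_expert : V 0 < V (5/92) := by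
  rw [V_eq le_rfl (by norm_num), V_eq (by norm_num) (by norm_num)]
  norm_num
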